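/- Let f : ℝ^n → ℝ^m be continuously differentiable and injective, and suppose there exists a continuously differentiable map g : ℝ^m → ℝ^n with g(f(x)) = x for all x ∈ ℝ^n (a C¹ left inverse). Let ρ be a Borel probability measure on ℝ^n and let v, w : ℝ^n → ℝ^n be Borel measurable with ∫ (|v| + |w| + |Df_x(v(x))| + |Df_x(w(x))|) dρ < ∞. If there exists φ ∈ C_c^1(ℝ^n) with ∫_{ℝ^n} ⟨∇φ(x), v(x) − w(x)⟩ dρ(x) ≠ 0, then there exists ς ∈ C_c^1(ℝ^m) such that ∫_{ℝ^m} ⟨∇ς(y), Df_{g(y)}((v − w)(g(y)))⟩ d(f#ρ)(y) ≠ 0. -/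

import Mathlib

open MeasureTheory Function
open scoped RealInnerProductSpace ENNReal

/-!
Extend the test function `φ` to the target as `ς = χ · (φ ∘ g)`, where `χ` is a bump function
equal to `1` on the compact set `f '' tsupport φ`; then `ς ∘ f = φ`. By the chain rule
`⟪∇ς (f x), Df_x u⟫ = ⟪∇φ x, u⟫`, and since `f` is a closed embedding (it has the continuous
left inverse `g`), integrating against `f#ρ` is integrating the composite against `ρ`, so the
two integrals coincide.
-/

theorem HasCompactSupport.exists_contDiff_comp_eq_of_leftInverse
    {E F G : Type*} [NormedAddCommGroup E] [NormedSpace ℝ E]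
    [NormedAddCommGroup F] [NormedSpace ℝ F] [FiniteDimensional ℝ F]
    [NormedAddCommGroup G] [NormedSpace ℝ G] {k : ℕ∞}
    {f : E → F} {g : F → E} {φ : E → G} (hφc : HasCompactSupport φ) (hφ : ContDiff ℝ k φ)
    (hf : Continuous f) (hg : ContDiff ℝ k g) (hgf : LeftInverse g f) :
    ∃ ς : F → G, ContDiff ℝ k ς ∧ HasCompactSupport ς ∧ ς ∘ f = φ := by
  obtain ⟨r, hr⟩ := (hφc.image hf).isBounded.subset_closedBall 0
  let χ : ContDiffBump (0 : F) := ⟨|r| + 1, |r| + 2, by positivity, by linarith⟩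
  refine ⟨fun y => χ y • φ (g y), χ.contDiff.smul (hφ.comp hg), χ.hasCompactSupport.smul_right,
    funext fun x => ?_⟩
  by_cases hx : x ∈ tsupport φ
  · have hχ : f x ∈ Metric.closedBall 0 χ.rIn :=
      Metric.closedBall_subset_closedBall (by simp [χ]; linarith [le_abs_self r])
        (hr (Set.mem_image_of_mem f hx))
    simp [χ.one_of_mem_closedBall hχ, hgf x]
  · simp [hgf x, image_eq_zero_of_notMem_tsupport hx]

theorem inner_gradient_comp {E F : Type*} [NormedAddCommGroup E] [InnerProductSpace ℝ E]
    [CompleteSpace E] [NormedAddCommGroup F] [InnerProductSpace ℝ F] [CompleteSpace F]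
    {ς : F → ℝ} {f : E → F} {x : E} (hς : DifferentiableAt ℝ ς (f x))
    (hf : DifferentiableAt ℝ f x) (u : E) :
    ⟪gradient (ς ∘ f) x, u⟫ = ⟪gradient ς (f x), fderiv ℝ f x u⟫ := by
  rw [inner_gradient_left, inner_gradient_left, fderiv_comp x hς hf]
  rfl

theorem pushforward_derivative_injective_general (n m : ℕ)
    (f : EuclideanSpace ℝ (Fin n) → EuclideanSpace ℝ (Fin m))
    (hf : ContDiff ℝ 1 f)
    (g : EuclideanSpace ℝ (Fin m) → EuclideanSpace ℝ (Fin n))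
    (hgC1 : ContDiff ℝ 1 g) (hg : ∀ x, g (f x) = x)
    (ρ : Measure (EuclideanSpace ℝ (Fin n)))
    (v w : EuclideanSpace ℝ (Fin n) → EuclideanSpace ℝ (Fin n))
    (hne : ∃ φ : EuclideanSpace ℝ (Fin n) → ℝ, ContDiff ℝ 1 φ ∧ HasCompactSupport φ ∧
      ∫ x, ⟪gradient φ x, v x - w x⟫ ∂ρ ≠ 0) :
    ∃ ς : EuclideanSpace ℝ (Fin m) → ℝ, ContDiff ℝ 1 ς ∧ HasCompactSupport ς ∧
      ∫ y, ⟪gradient ς y, fderiv ℝ f (g y) (v (g y) - w (g y))⟫ ∂(ρ.map f) ≠ 0 := by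
  obtain ⟨φ, hφ, hφc, hφne⟩ := hne
  obtain ⟨ς, hς, hςc, hςf⟩ :=
    hφc.exists_contDiff_comp_eq_of_leftInverse hφ hf.continuous hgC1 hg
  refine ⟨ς, hς, hςc, ?_⟩
  have hfemb : MeasurableEmbedding f :=
    (LeftInverse.isClosedEmbedding hg hgC1.continuous hf.continuous).measurableEmbedding
  have hintegrand (x) : ⟪gradient ς (f x), fderiv ℝ f (g (f x)) (v (g (f x)) - w (g (f x)))⟫ =
      ⟪gradient φ x, v x - w x⟫ := by
    rw [hg, ← hςf, inner_gradient_comp (hς.differentiable one_ne_zero _)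
      (hf.differentiable one_ne_zero _)]
  rwa [hfemb.integral_map, funext hintegrand]

/-- Injectivity of the derivative of the pushforward map: if two vector
fields `v, w` are distinguished at `ρ` by some test function `φ ∈ C_c¹(ℝⁿ)`, then the
transported vector fields are distinguished at `f#ρ` by some test function
`ς ∈ C_c¹(ℝᵐ)`. -/
theorem pushforward_derivative_injective (n m : ℕ)
    (f : EuclideanSpace ℝ (Fin n) → EuclideanSpace ℝ (Fin m))
    (hf : ContDiff ℝ 1 f) (hinj : Function.Injective f)
    (g : EuclideanSpace ℝ (Fin m) → EuclideanSpace ℝ (Fin n))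
    (hgC1 : ContDiff ℝ 1 g) (hg : ∀ x, g (f x) = x)
    (ρ : Measure (EuclideanSpace ℝ (Fin n))) [IsProbabilityMeasure ρ]
    (v w : EuclideanSpace ℝ (Fin n) → EuclideanSpace ℝ (Fin n))
    (hv : Measurable v) (hw : Measurable w)
    (hint : (∫⁻ x, ((‖v x‖₊ : ℝ≥0∞) + (‖w x‖₊ : ℝ≥0∞) +
      (‖fderiv ℝ f x (v x)‖₊ : ℝ≥0∞) + (‖fderiv ℝ f x (w x)‖₊ : ℝ≥0∞)) ∂ρ) < ⊤)
    (hne : ∃ φ : EuclideanSpace ℝ (Fin n) → ℝ, ContDiff ℝ 1 φ ∧ HasCompactSupport φ ∧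
      ∫ x, ⟪gradient φ x, v x - w x⟫ ∂ρ ≠ 0) :
    ∃ ς : EuclideanSpace ℝ (Fin m) → ℝ, ContDiff ℝ 1 ς ∧ HasCompactSupport ς ∧
      ∫ y, ⟪gradient ς y, fderiv ℝ f (g y) (v (g y) - w (g y))⟫ ∂(ρ.map f) ≠ 0 :=
  pushforward_derivative_injective_general n m f hf g hgC1 hg ρ v w hne
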